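/- arXiv:2605.25370 — 5 statements merged into one kernel-verified Lean document; each statement's English description precedes it below -/
import Mathlib

section
/- Under the assumption 4*a2*a4 > (a1+a3)^2 with a1,...,a4 > 0, let β = (1/2)*sqrt(4*a2*a4 - (a1+a3)^2), and let (z(τ), y(τ)) be the solution of ż = a1 z - a2 y, ẏ = a4 z - a3 y with z(0) = z0 > 0 and y(0) = y' ≥ 0. Then at time τ = π/β one has (z(π/β), y(π/β)) = e^{((a1-a3)/2)·(π/β)} · (−z0, −y'); in particular z(π/β) < z0. Consequently the characteristic curve eventually leaves the region B = {(z,y) : z > z0, y > 0}. -/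
/-!
The system matrix has the complex eigenvalues `(a1 - a3)/2 ± iβ`. For a suitable complex `c`, the
coordinate `w = z + c y` satisfies `w' = ((a1 - a3)/2 + iβ) w`, so `w (π/β) = -e^{(a1-a3)π/(2β)} w 0`
because `e^{iπ} = -1`; since `c` is not real, this identity splits into the two real components.
-/

open Complex

theorem eq_exp_mul_of_hasDerivAt {f : ℝ → ℂ} {l : ℂ}
    (hf : ∀ t, HasDerivAt f (l * f t) t) (t : ℝ) :
    f t = exp (l * t) * f 0 := by
  let g : ℝ → ℂ := fun s => exp (-l * s) * f s
  have hg : ∀ s, HasDerivAt g 0 s := by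
    intro s
    have hexp : HasDerivAt (fun s : ℝ => exp (-l * s)) (exp (-l * s) * -l) s := by
      simpa using ((hasDerivAt_id s).ofReal_comp.const_mul (-l)).cexp
    refine (hexp.mul (hf s)).congr_deriv ?_
    ring
  have hconst : g t = g 0 :=
    is_const_of_deriv_eq_zero (fun s => (hg s).differentiableAt) (fun s => (hg s).deriv) t 0
  calc f t = exp (l * t) * g t := by simp only [g, ← mul_assoc, ← exp_add]; simp
    _ = exp (l * t) * f 0 := by rw [hconst]; simp [g]

theorem Complex.ofReal_add_mul_ofReal_inj {c : ℂ} (hc : c.im ≠ 0) {x₁ y₁ x₂ y₂ : ℝ}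
    (h : (x₁ : ℂ) + c * y₁ = x₂ + c * y₂) : x₁ = x₂ ∧ y₁ = y₂ := by
  have hy : y₁ = y₂ := by
    have := congrArg im h
    simp only [add_im, ofReal_im, mul_im, ofReal_re, zero_add, mul_zero] at this
    exact mul_left_cancel₀ hc this
  subst hy
  exact ⟨by exact_mod_cast add_right_cancel h, rfl⟩

section LinearSystem

variable {a1 a2 a3 a4 : ℝ} {z y : ℝ → ℝ}
  (hzode : ∀ τ : ℝ, HasDerivAt z (a1 * z τ - a2 * y τ) τ)
  (hyode : ∀ τ : ℝ, HasDerivAt y (a4 * z τ - a3 * y τ) τ)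
include hzode hyode

theorem hasDerivAt_ofReal_add_mul {c : ℂ} (hc : a4 * c ^ 2 + (a1 + a3) * c + a2 = 0)
    (τ : ℝ) :
    HasDerivAt (fun t => (z t : ℂ) + c * y t) ((a1 + a4 * c) * (z τ + c * y τ)) τ := by
  refine ((hzode τ).ofReal_comp.add ((hyode τ).ofReal_comp.const_mul c)).congr_deriv ?_
  push_cast
  linear_combination -(y τ : ℂ) * hc

theorem linearSystem_half_period {β : ℝ} (hβ : β ≠ 0)
    (hβsq : 4 * β ^ 2 = 4 * a2 * a4 - (a1 + a3) ^ 2) :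
    z (Real.pi / β) = Real.exp ((a1 - a3) / 2 * (Real.pi / β)) * -z 0 ∧
    y (Real.pi / β) = Real.exp ((a1 - a3) / 2 * (Real.pi / β)) * -y 0 := by
  have ha4 : a4 ≠ 0 := by
    rintro rfl
    nlinarith [sq_pos_of_ne_zero hβ, sq_nonneg (a1 + a3)]
  have ha4' : (a4 : ℂ) ≠ 0 := ofReal_ne_zero.mpr ha4
  have hβ' : (β : ℂ) ≠ 0 := ofReal_ne_zero.mpr hβ
  -- the root of `a4 c² + (a1 + a3) c + a2` for which `a1 + a4 c = (a1 - a3)/2 + iβ`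
  set c : ℂ := (-(a1 + a3) + 2 * β * I) / (2 * a4)
  have hc : a4 * c ^ 2 + (a1 + a3) * c + a2 = 0 := by
    have hβsq' : (4 : ℂ) * β ^ 2 = 4 * a2 * a4 - (a1 + a3) ^ 2 := by exact_mod_cast hβsq
    simp only [c]
    field_simp
    linear_combination 4 * (β : ℂ) ^ 2 * I_sq - hβsq'
  have hlT : (a1 + a4 * c) * (Real.pi / β : ℝ) =
      ((a1 - a3) / 2 * (Real.pi / β) : ℝ) + Real.pi * I := by
    simp only [c]
    push_cast
    field_simp
    ring
  have hsol := eq_exp_mul_of_hasDerivAt (hasDerivAt_ofReal_add_mul hzode hyode hc) (Real.pi / β)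
  rw [hlT, exp_add, exp_pi_mul_I, ← ofReal_exp] at hsol
  have hcim : c.im ≠ 0 := by simp [c, div_im, hβ, ha4]
  refine ofReal_add_mul_ofReal_inj hcim ?_
  rw [hsol]
  push_cast
  ring

end LinearSystem

theorem stmt2_general (a1 a2 a3 a4 : ℝ) (h : 4 * a2 * a4 > (a1 + a3) ^ 2)
    (β : ℝ) (hβ : β = (1 / 2) * Real.sqrt (4 * a2 * a4 - (a1 + a3) ^ 2))
    (z0 y' : ℝ) (hz0 : 0 < z0)
    (z y : ℝ → ℝ)
    (hzode : ∀ τ : ℝ, HasDerivAt z (a1 * z τ - a2 * y τ) τ)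
    (hyode : ∀ τ : ℝ, HasDerivAt y (a4 * z τ - a3 * y τ) τ)
    (hz0' : z 0 = z0) (hy0' : y 0 = y') :
    z (Real.pi / β) = Real.exp ((a1 - a3) / 2 * (Real.pi / β)) * (-z0) ∧
    y (Real.pi / β) = Real.exp ((a1 - a3) / 2 * (Real.pi / β)) * (-y') ∧
    z (Real.pi / β) < z0 ∧
    (∃ τ : ℝ, 0 < τ ∧ ¬ (z τ > z0 ∧ y τ > 0)) := by
  have hdisc : 0 < 4 * a2 * a4 - (a1 + a3) ^ 2 := by linarith
  have hβpos : 0 < β := by rw [hβ]; positivity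
  have hβsq : 4 * β ^ 2 = 4 * a2 * a4 - (a1 + a3) ^ 2 := by
    rw [hβ, mul_pow, Real.sq_sqrt hdisc.le]; ring
  obtain ⟨hz, hy⟩ := linearSystem_half_period hzode hyode hβpos.ne' hβsq
  rw [hz0'] at hz
  rw [hy0'] at hy
  have hlt : z (Real.pi / β) < z0 := by
    rw [hz]; nlinarith [Real.exp_pos ((a1 - a3) / 2 * (Real.pi / β))]
  exact ⟨hz, hy, hlt, Real.pi / β, div_pos Real.pi_pos hβpos, fun hB => hB.1.not_gt hlt⟩

theorem stmt2 (a1 a2 a3 a4 : ℝ) (ha1 : 0 < a1) (ha2 : 0 < a2) (ha3 : 0 < a3)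
    (ha4 : 0 < a4) (h : 4 * a2 * a4 > (a1 + a3) ^ 2)
    (β : ℝ) (hβ : β = (1 / 2) * Real.sqrt (4 * a2 * a4 - (a1 + a3) ^ 2))
    (z0 y' : ℝ) (hz0 : 0 < z0) (hy' : 0 ≤ y')
    (z y : ℝ → ℝ)
    (hzode : ∀ τ : ℝ, HasDerivAt z (a1 * z τ - a2 * y τ) τ)
    (hyode : ∀ τ : ℝ, HasDerivAt y (a4 * z τ - a3 * y τ) τ)
    (hz0' : z 0 = z0) (hy0' : y 0 = y') :
    z (Real.pi / β) = Real.exp ((a1 - a3) / 2 * (Real.pi / β)) * (-z0) ∧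
    y (Real.pi / β) = Real.exp ((a1 - a3) / 2 * (Real.pi / β)) * (-y') ∧
    z (Real.pi / β) < z0 ∧
    (∃ τ : ℝ, 0 < τ ∧ ¬ (z τ > z0 ∧ y τ > 0)) :=
  stmt2_general a1 a2 a3 a4 h β hβ z0 y' hz0 z y hzode hyode hz0' hy0'
end

section
/- Let a1,...,a4 > 0 with 4*a2*a4 > (a1+a3)^2, z0 > 0, y0 = z0*a1/a2, and y' ∈ [0, y0). Then there exists a minimal τ1 > 0 such that the characteristic curve (z(τ), y(τ)) starting at (z0, y') satisfies z(τ1) = z0, and for this τ1 one has y(τ1) > y0. -/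
/-!
Since `ż(0) = a1 z0 - a2 y' > 0`, the trajectory enters `B`. It has to come back to the line
`z = z0`: otherwise `z > 0` for all `τ ≥ 0`, and the angle `arctan (y / z)` would grow at the rate
`Q(z, y) / (z² + y²)`, where `Q(z, y) = a4 z² - (a1 + a3) z y + a2 y²` is positive definite
exactly because `4 a2 a4 > (a1 + a3)²`; an angle confined to `(-π/2, π/2)` cannot do that.
At the first return time `τ1` the trajectory arrives from above, so `ż(τ1) = a1 z0 - a2 y(τ1) ≤ 0`,
i.e. `y(τ1) ≥ y0`. Equality is impossible: then `ż(τ1) = 0` and `z̈(τ1) = -z0 (a2 a4 - a1 a3) < 0`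
would make `τ1` a local maximum of `z`.
-/

open Set Filter Topology Real

lemma HasDerivAt.eventually_lt_nhdsLT {f : ℝ → ℝ} {a d : ℝ} (hf : HasDerivAt f d a)
    (hd : 0 < d) : ∀ᶠ s in 𝓝[<] a, f s < f a := by
  filter_upwards [((hasDerivAt_iff_tendsto_slope.mp hf).mono_left (nhdsLT_le_nhdsNE a)).eventually
    (eventually_gt_nhds hd), self_mem_nhdsWithin] with s hs (hsa : s < a)
  exact (slope_pos_iff_gt hsa).mp hs

lemma HasDerivAt.eventually_gt_nhdsGT {f : ℝ → ℝ} {a d : ℝ} (hf : HasDerivAt f d a)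
    (hd : 0 < d) : ∀ᶠ s in 𝓝[>] a, f a < f s := by
  filter_upwards [((hasDerivAt_iff_tendsto_slope.mp hf).mono_left (nhdsGT_le_nhdsNE a)).eventually
    (eventually_gt_nhds hd), self_mem_nhdsWithin] with s hs (has : a < s)
  exact (slope_pos_iff has).mp hs

lemma IsPreconnected.forall_lt_of_forall_ne {X α : Type*} [TopologicalSpace X] [LinearOrder α]
    [TopologicalSpace α] [OrderClosedTopology α] {s : Set X} {f : X → α} {a : X} {c : α}
    (hs : IsPreconnected s) (hf : ContinuousOn f s) (ha : a ∈ s) (hfa : c < f a)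
    (hne : ∀ x ∈ s, f x ≠ c) : ∀ x ∈ s, c < f x := by
  intro x hx
  by_contra! hle
  obtain ⟨t, ht, hft⟩ := hs.intermediate_value hx ha hf ⟨hle, hfa.le⟩
  exact hne t ht hft

lemma exists_isLeast_return {f : ℝ → ℝ} {a c : ℝ} (hf : Continuous f)
    (hnear : ∀ᶠ s in 𝓝[>] a, c < f s) (hdrop : ∃ s > a, f s ≤ c) :
    ∃ τ, IsLeast {s | a < s ∧ f s = c} τ ∧ ∀ s ∈ Ioo a τ, c < f s := by
  obtain ⟨δ, hδ : a < δ, hδsub⟩ := mem_nhdsGT_iff_exists_Ioo_subset.mp hnear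
  obtain ⟨b, hab, hbδ⟩ := exists_between hδ
  have hfb : c < f b := hδsub ⟨hab, hbδ⟩
  have hge : ∀ s, a < s → f s ≤ c → b ≤ s := fun s has hfs ↦ by
    by_contra! hsb
    exact (hδsub ⟨has, hsb.trans hbδ⟩ : c < f s).not_ge hfs
  have hS : {s | a < s ∧ f s = c} = Ici b ∩ f ⁻¹' {c} := by
    ext s
    exact ⟨fun ⟨has, hfs⟩ ↦ ⟨hge s has hfs.le, hfs⟩, fun ⟨hbs, hfs⟩ ↦ ⟨hab.trans_le hbs, hfs⟩⟩
  have hne : (Ici b ∩ f ⁻¹' {c}).Nonempty := by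
    obtain ⟨s, has, hfs⟩ := hdrop
    obtain ⟨t, ht, hft⟩ := intermediate_value_Icc' (hge s has hfs) hf.continuousOn ⟨hfs, hfb.le⟩
    exact ⟨t, ht.1, hft⟩
  obtain ⟨τ, hτ⟩ : ∃ τ, IsLeast {s | a < s ∧ f s = c} τ :=
    hS ▸ ⟨_, (isClosed_Ici.inter (isClosed_singleton.preimage hf)).isLeast_csInf hne
      ⟨b, fun s hs ↦ hs.1⟩⟩
  have hbτ : b < τ :=
    (hge τ hτ.1.1 hτ.1.2.le).lt_of_ne fun hbτ ↦ hfb.ne' (hbτ ▸ hτ.1.2)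
  exact ⟨τ, hτ, isPreconnected_Ioo.forall_lt_of_forall_ne hf.continuousOn ⟨hab, hbτ⟩ hfb
    fun s hs hfs ↦ (hτ.2 ⟨hs.1, hfs⟩).not_gt hs.2⟩

-- The constant comes from the identity `4 (p + r) (p x² + q x y + r y²) - (4 p r - q²) (x² + y²)`
-- `= (2 p x + q y)² + (2 r y + q x)²`.
lemma exists_pos_mul_le_quadratic {p q r : ℝ} (hp : 0 < p) (hdisc : q ^ 2 < 4 * p * r) :
    ∃ c > 0, ∀ x y : ℝ, c * (x ^ 2 + y ^ 2) ≤ p * x ^ 2 + q * x * y + r * y ^ 2 := by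
  have hr : 0 < r := by nlinarith [sq_nonneg q]
  refine ⟨(4 * p * r - q ^ 2) / (4 * (p + r)), div_pos (by linarith) (by positivity),
    fun x y ↦ ?_⟩
  rw [div_mul_eq_mul_div, div_le_iff₀ (by positivity)]
  nlinarith [sq_nonneg (2 * p * x + q * y), sq_nonneg (2 * r * y + q * x)]

lemma HasDerivAt.arctan_div {z y : ℝ → ℝ} {z' y' τ : ℝ} (hz : HasDerivAt z z' τ)
    (hy : HasDerivAt y y' τ) (hzτ : z τ ≠ 0) :
    HasDerivAt (fun t ↦ Real.arctan (y t / z t))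
      ((z τ * y' - y τ * z') / (z τ ^ 2 + y τ ^ 2)) τ := by
  refine (hy.div hz hzτ).arctan.congr_deriv ?_
  rw [Pi.div_apply]
  field_simp

lemma exists_nonpos_of_hasDerivAt_linear {a1 a2 a3 a4 : ℝ} (ha2 : 0 < a2)
    (h : 4 * a2 * a4 > (a1 + a3) ^ 2) {z y : ℝ → ℝ}
    (hzode : ∀ τ, HasDerivAt z (a1 * z τ - a2 * y τ) τ)
    (hyode : ∀ τ, HasDerivAt y (a4 * z τ - a3 * y τ) τ) :
    ∃ τ ≥ 0, z τ ≤ 0 := by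
  by_contra! hpos
  obtain ⟨c, hc, hQ⟩ :=
    exists_pos_mul_le_quadratic (p := a2) (q := -(a1 + a3)) (r := a4) ha2 (by nlinarith)
  have hθ : ∀ τ ≥ 0, HasDerivAt (fun t ↦ arctan (y t / z t) - c * t)
      ((z τ * (a4 * z τ - a3 * y τ) - y τ * (a1 * z τ - a2 * y τ)) / (z τ ^ 2 + y τ ^ 2) - c) τ :=
    fun τ hτ ↦ ((hzode τ).arctan_div (hyode τ) (hpos τ hτ).ne').sub
      (((hasDerivAt_id' τ).const_mul c).congr_deriv (mul_one c))
  have hmono : MonotoneOn (fun t ↦ arctan (y t / z t) - c * t) (Ici 0) := by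
    refine monotoneOn_of_hasDerivWithinAt_nonneg (convex_Ici 0)
      (fun τ hτ ↦ (hθ τ hτ).continuousAt.continuousWithinAt)
      (fun τ hτ ↦ (hθ τ (interior_subset hτ)).hasDerivWithinAt) fun τ hτ ↦ ?_
    have hzτ := hpos τ (interior_subset hτ)
    rw [sub_nonneg, le_div_iff₀ (by positivity)]
    nlinarith [hQ (y τ) (z τ)]
  have := hmono self_mem_Ici (show 0 ≤ π / c by positivity) (by positivity)
  simp only [mul_zero, sub_zero, mul_div_cancel₀ π hc.ne'] at this
  linarith [neg_pi_div_two_lt_arctan (y 0 / z 0), arctan_lt_pi_div_two (y (π / c) / z (π / c))]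

lemma lt_of_return_from_above {a1 a2 a3 a4 z0 y0 τ1 : ℝ} (ha2 : 0 < a2)
    (h : 4 * a2 * a4 > (a1 + a3) ^ 2) (hz0 : 0 < z0) (hy0 : a2 * y0 = a1 * z0) {z y : ℝ → ℝ}
    (hzode : ∀ τ, HasDerivAt z (a1 * z τ - a2 * y τ) τ)
    (hyode : ∀ τ, HasDerivAt y (a4 * z τ - a3 * y τ) τ)
    (hzτ1 : z τ1 = z0) (habove : ∀ᶠ τ in 𝓝[<] τ1, z0 < z τ) :
    y0 < y τ1 := by
  have hnotle : ¬ ∀ᶠ τ in 𝓝[<] τ1, z τ ≤ z0 := fun hle ↦ by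
    obtain ⟨τ, hlt, hle⟩ := (habove.and hle).exists
    exact hlt.not_ge hle
  have hge : y0 ≤ y τ1 := by
    by_contra! hlt
    refine hnotle (((hzode τ1).eventually_lt_nhdsLT ?_).mono fun τ hτ ↦ hzτ1 ▸ hτ.le)
    rw [hzτ1]
    nlinarith
  refine hge.lt_of_ne fun heq ↦ hnotle ?_
  have hderiv : deriv z = fun τ ↦ a1 * z τ - a2 * y τ := funext fun τ ↦ (hzode τ).deriv
  have hmax : IsLocalMax z τ1 := by
    refine isLocalMax_of_deriv_deriv_neg ?_ ?_ (hzode τ1).continuousAt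
    · have hz'' : HasDerivAt (fun τ ↦ a1 * z τ - a2 * y τ)
          (a1 * (a1 * z τ1 - a2 * y τ1) - a2 * (a4 * z τ1 - a3 * y τ1)) τ1 :=
        ((hzode τ1).const_mul a1).sub ((hyode τ1).const_mul a2)
      have hdet : a1 * a3 < a2 * a4 := by nlinarith [sq_nonneg (a1 - a3)]
      have hz''_eq : a1 * (a1 * z0 - a2 * y0) - a2 * (a4 * z0 - a3 * y0)
          = -(z0 * (a2 * a4 - a1 * a3)) := by
        linear_combination (a3 - a1) * hy0
      rw [hderiv, hz''.deriv, hzτ1, ← heq, hz''_eq]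
      exact neg_neg_of_pos (mul_pos hz0 (sub_pos.2 hdet))
    · simp only [hderiv, hzτ1, ← heq]
      linarith
  exact (hmax.filter_mono nhdsWithin_le_nhds).mono fun τ hτ ↦ hzτ1 ▸ hτ

theorem stmt3_general (a1 a2 a3 a4 : ℝ) (ha2 : 0 < a2)
    (h : 4 * a2 * a4 > (a1 + a3) ^ 2)
    (z0 y0 y' : ℝ) (hz0 : 0 < z0) (hy0 : y0 = z0 * a1 / a2)
    (hy' : y' ∈ Set.Ico (0 : ℝ) y0)
    (z y : ℝ → ℝ)
    (hzode : ∀ τ : ℝ, HasDerivAt z (a1 * z τ - a2 * y τ) τ)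
    (hyode : ∀ τ : ℝ, HasDerivAt y (a4 * z τ - a3 * y τ) τ)
    (hzi : z 0 = z0) (hyi : y 0 = y') :
    ∃ τ1 : ℝ, 0 < τ1 ∧ z τ1 = z0 ∧ y τ1 > y0 ∧
      ∀ τ : ℝ, 0 < τ → z τ = z0 → τ1 ≤ τ := by
  have hy0' : a2 * y0 = a1 * z0 := by rw [hy0]; field_simp
  have hcz : Continuous z := continuous_iff_continuousAt.2 fun τ ↦ (hzode τ).continuousAt
  have henter : ∀ᶠ τ in 𝓝[>] 0, z0 < z τ := by
    refine hzi ▸ (hzode 0).eventually_gt_nhdsGT ?_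
    rw [hzi, hyi]
    nlinarith [hy'.2]
  have hdrop : ∃ τ > 0, z τ ≤ z0 := by
    obtain ⟨τ, hτ, hzτ⟩ := exists_nonpos_of_hasDerivAt_linear ha2 h hzode hyode
    refine ⟨τ, hτ.lt_of_ne ?_, by linarith⟩
    rintro rfl
    linarith
  obtain ⟨τ1, ⟨⟨hτ1, hzτ1⟩, hmin⟩, habove⟩ := exists_isLeast_return hcz henter hdrop
  refine ⟨τ1, hτ1, hzτ1, ?_, fun τ hτ hzτ ↦ hmin ⟨hτ, hzτ⟩⟩
  refine lt_of_return_from_above ha2 h hz0 hy0' hzode hyode hzτ1 ?_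
  exact eventually_of_mem (Ioo_mem_nhdsLT hτ1) habove

theorem stmt3 (a1 a2 a3 a4 : ℝ) (ha1 : 0 < a1) (ha2 : 0 < a2) (ha3 : 0 < a3)
    (ha4 : 0 < a4) (h : 4 * a2 * a4 > (a1 + a3) ^ 2)
    (z0 y0 y' : ℝ) (hz0 : 0 < z0) (hy0 : y0 = z0 * a1 / a2)
    (hy' : y' ∈ Set.Ico (0 : ℝ) y0)
    (z y : ℝ → ℝ)
    (hzode : ∀ τ : ℝ, HasDerivAt z (a1 * z τ - a2 * y τ) τ)
    (hyode : ∀ τ : ℝ, HasDerivAt y (a4 * z τ - a3 * y τ) τ)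
    (hzi : z 0 = z0) (hyi : y 0 = y') :
    ∃ τ1 : ℝ, 0 < τ1 ∧ z τ1 = z0 ∧ y τ1 > y0 ∧
      ∀ τ : ℝ, 0 < τ → z τ = z0 → τ1 ≤ τ :=
  stmt3_general a1 a2 a3 a4 ha2 h z0 y0 y' hz0 hy0 hy' z y hzode hyode hzi hyi
end

section
/- Let all parameters b, β_{vh}, β_{hv}, m, μ_v, τ_v, τ_h, τ1, τ2 be positive and define R0 = b²β_{vh}β_{hv} m τ1 / (μ_v(μ_v τ_v + 1)). Then the triple E* = μ_v τ_h (R0 − 1)/(μ_v R0 (τ1 + τ2 + τ_h) + b β_{hv} τ1), E_v* = μ_v τ_v (R0 − 1)/(R0(1 + μ_v τ_v) + b β_{vh} m (τ1 + τ2 + τ_h)), I_v* = (R0 − 1)/(R0(1 + μ_v τ_v) + b β_{vh} m (τ1 + τ2 + τ_h)) is a stationary solution of the delay system E' = bβ_{vh} m I_v (1 − E − (1/τ_h)∫_{t−τ1−τ2}^{t} E) − E/τ_h, E_v' = bβ_{hv}(1/τ_h)∫_{t−τ1}^{t} E · (1 − E_v − I_v) − (1/τ_v + μ_v)E_v, I_v'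 = E_v/τ_v − μ_v I_v; i.e., with constant E ≡ E*, E_v ≡ E_v*, I_v ≡ I_v*, the right-hand sides vanish. -/
/-!
At a constant state the two delay integrals are `E (τ1 + τ2) / τh` and `E τ1 / τh`, and the third
equation gives `E_v = μv τv I_v`. In the unknowns `e = E / τh` and `I = I_v` the first two equations
become the planar system `A I (1 - S e) = e`, `B e (1 - K I) = C I` with `A = b βvh m`,
`B = b βhv τ1`, `K = μv τv + 1`, `C = μv K`, `S = τ1 + τ2 + τh`, so that `R0 = A B / C`;
its nonzero equilibrium is explicit.
-/

theorem planar_equilibrium {A B C K S e I : ℝ} (hA : A ≠ 0) (hB : B ≠ 0)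
    (hAK : A * S + K ≠ 0) (hBC : B * K + C * S ≠ 0)
    (he : e = (A * B - C) / (B * (A * S + K))) (hI : I = (A * B - C) / (A * (B * K + C * S))) :
    A * I * (1 - S * e) = e ∧ B * e * (1 - K * I) = C * I := by
  subst he hI
  constructor
  · field_simp
    ring
  · field_simp
    ring

theorem stmt10
    (b βvh βhv m μv τv τh τ1 τ2 R0 : ℝ)
    (hb : 0 < b) (hβvh : 0 < βvh) (hβhv : 0 < βhv) (hm : 0 < m)
    (hμv : 0 < μv) (hτv : 0 < τv) (hτh : 0 < τh) (hτ1 : 0 < τ1) (hτ2 : 0 < τ2)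
    (hR0 : R0 = b ^ 2 * βvh * βhv * m * τ1 / (μv * (μv * τv + 1)))
    (Estar Evstar Ivstar : ℝ)
    (hE : Estar = μv * τh * (R0 - 1) / (μv * R0 * (τ1 + τ2 + τh) + b * βhv * τ1))
    (hEv : Evstar = μv * τv * (R0 - 1) / (R0 * (1 + μv * τv) + b * βvh * m * (τ1 + τ2 + τh)))
    (hIv : Ivstar = (R0 - 1) / (R0 * (1 + μv * τv) + b * βvh * m * (τ1 + τ2 + τh))) :
    ∀ t : ℝ,
      (b * βvh * m * Ivstar *
        (1 - Estar - ∫ s in (t - τ1 - τ2)..t, Estar / τh) - Estar / τh = 0) ∧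
      (b * βhv * (∫ s in (t - τ1)..t, Estar / τh) * (1 - Evstar - Ivstar)
        - (1 / τv + μv) * Evstar = 0) ∧
      (Evstar / τv - μv * Ivstar = 0) := by
  intro t
  set e := Estar / τh with he_def
  have hEe : Estar = τh * e := (mul_div_cancel₀ Estar hτh.ne').symm
  have he : e = (b * βvh * m * (b * βhv * τ1) - μv * (μv * τv + 1)) /
      (b * βhv * τ1 * (b * βvh * m * (τ1 + τ2 + τh) + (μv * τv + 1))) := by
    rw [he_def, hE, hR0]
    field_simp
  have hI : Ivstar = (b * βvh * m * (b * βhv * τ1) - μv * (μv * τv + 1)) /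
      (b * βvh * m * (b * βhv * τ1 * (μv * τv + 1) + μv * (μv * τv + 1) * (τ1 + τ2 + τh))) := by
    rw [hIv, hR0]
    field_simp
    ring
  have hEvI : Evstar = μv * τv * Ivstar := by rw [hEv, hIv]; ring
  obtain ⟨h₁, h₂⟩ := planar_equilibrium (by positivity) (by positivity) (by positivity)
    (by positivity) he hI
  have hτv_inv : 1 / τv * τv = 1 := one_div_mul_cancel hτv.ne'
  rw [intervalIntegral.integral_const, intervalIntegral.integral_const, smul_eq_mul,
    smul_eq_mul]
  refine ⟨?_, ?_, ?_⟩
  · linear_combination h₁ - b * βvh * m * Ivstar * hEe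
  · rw [hEvI]
    linear_combination h₂ - μv * Ivstar * hτv_inv
  · rw [hEvI]
    linear_combination μv * Ivstar * hτv_inv
end

section
/- With positive parameters b, β_{vh}, β_{hv}, m, μ_v, τ_v, τ_h, τ1, τ2 and R0 = b²β_{vh}β_{hv} m τ1 / (μ_v(μ_v τ_v + 1)): the stationary values E*, E_v*, I_v* given by E* = μ_v τ_h (R0 − 1)/(μ_v R0(τ1+τ2+τ_h) + bβ_{hv}τ1), E_v* = μ_v τ_v (R0 − 1)/(R0(1+μ_vτ_v) + bβ_{vh}m(τ1+τ2+τ_h)), I_v* = (R0 − 1)/(R0(1+μ_vτ_v) + bβ_{vh}m(τ1+τ2+τ_h)) all lie in the open interval (0,1) if and only if R0 > 1. -/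
theorem stmt11
    (b βvh βhv m μv τv τh τ1 τ2 R0 : ℝ)
    (hb : 0 < b) (hβvh : 0 < βvh) (hβhv : 0 < βhv) (hm : 0 < m)
    (hμv : 0 < μv) (hτv : 0 < τv) (hτh : 0 < τh) (hτ1 : 0 < τ1) (hτ2 : 0 < τ2)
    (hR0 : R0 = b ^ 2 * βvh * βhv * m * τ1 / (μv * (μv * τv + 1)))
    (Estar Evstar Ivstar : ℝ)
    (hE : Estar = μv * τh * (R0 - 1) / (μv * R0 * (τ1 + τ2 + τh) + b * βhv * τ1))
    (hEv : Evstar = μv * τv * (R0 - 1) / (R0 * (1 + μv * τv) + b * βvh * m * (τ1 + τ2 + τh)))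
    (hIv : Ivstar = (R0 - 1) / (R0 * (1 + μv * τv) + b * βvh * m * (τ1 + τ2 + τh))) :
    (Estar ∈ Set.Ioo (0 : ℝ) 1 ∧ Evstar ∈ Set.Ioo (0 : ℝ) 1 ∧
      Ivstar ∈ Set.Ioo (0 : ℝ) 1) ↔ R0 > 1 := by
  have hR0pos : 0 < R0 := by rw [hR0]; positivity
  have hden1 : 0 < μv * R0 * (τ1 + τ2 + τh) + b * βhv * τ1 := by positivity
  have hden2 : 0 < R0 * (1 + μv * τv) + b * βvh * m * (τ1 + τ2 + τh) := by positivity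
  constructor
  · rintro ⟨⟨h1, _⟩, _⟩
    rw [hE, div_pos_iff] at h1
    rcases h1 with ⟨hnum, _⟩ | ⟨_, hneg⟩
    · nlinarith [mul_pos hμv hτh]
    · linarith
  · intro h
    refine ⟨⟨?_, ?_⟩, ⟨?_, ?_⟩, ?_, ?_⟩
    · rw [hE]; exact div_pos (by nlinarith [mul_pos hμv hτh]) hden1
    · rw [hE, div_lt_one hden1]
      nlinarith [mul_pos hμv hτh, mul_pos (mul_pos hμv hR0pos) (add_pos hτ1 hτ2),
        mul_pos (mul_pos hb hβhv) hτ1]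
    · rw [hEv]; exact div_pos (by nlinarith [mul_pos hμv hτv]) hden2
    · rw [hEv, div_lt_one hden2]
      nlinarith [mul_pos hμv hτv, mul_pos (mul_pos (mul_pos hb hβvh) hm)
        (add_pos (add_pos hτ1 hτ2) hτh), mul_pos (mul_pos hμv hτv) hR0pos]
    · rw [hIv]; exact div_pos (by linarith) hden2
    · rw [hIv, div_lt_one hden2]
      nlinarith [mul_pos hμv hτv, mul_pos (mul_pos (mul_pos hb hβvh) hm)
        (add_pos (add_pos hτ1 hτ2) hτh), mul_pos (mul_pos hμv hτv) hR0pos]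
end

section
/- Consider the characteristic equation at the disease-free equilibrium of the UHR model: 0 = τ_h τ_v λ³ + (2τ_hτ_vμ_v + τ_h + τ_v)λ² + (τ_hτ_vμ_v² + τ_hμ_v + 2τ_vμ_v + 1)λ + (τ_vμ_v² + μ_v) + b²β_{vh}β_{hv} m (e^{−λτ1} − 1)/λ, for real λ ≠ 0 (with the last term extended by continuity to −b²β_{vh}β_{hv}mτ1 at λ = 0). If R0 = b²β_{vh}β_{hv}mτ1/(μ_v(μ_vτ_v+1)) < 1, then every real root λ of this equation is negative. Conversely, if R0 > 1, then the equation has a positive real root. -/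
open Real Filter Set

lemma exp_term_gt (τ1 l : ℝ) (hτ1 : 0 < τ1) (hl : 0 < l) :
    -τ1 < (Real.exp (-l * τ1) - 1) / l := by
  have hx : (-(l * τ1)) ≠ 0 := by
    have : 0 < l * τ1 := mul_pos hl hτ1
    linarith
  have h := Real.add_one_lt_exp hx
  rw [lt_div_iff₀ hl]
  rw [show -l * τ1 = -(l * τ1) by ring]
  nlinarith [h]

lemma g_contAt0 (τ1 : ℝ) :
    ContinuousAt (fun l : ℝ => if l = 0 then -τ1 else (Real.exp (-l * τ1) - 1) / l) 0 := by
  set g : ℝ → ℝ := fun l => if l = 0 then -τ1 else (Real.exp (-l * τ1) - 1) / l with hg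
  have hd : HasDerivAt (fun l : ℝ => Real.exp (-l * τ1)) (-τ1) 0 := by
    have h1 : HasDerivAt (fun l : ℝ => -l * τ1) (-τ1) 0 := by
      simpa using ((hasDerivAt_id (0:ℝ)).neg.mul_const τ1)
    have := h1.exp
    simpa using this
  have hs := hasDerivAt_iff_tendsto_slope.mp hd
  have heq : ∀ l ∈ ({(0:ℝ)}ᶜ : Set ℝ), slope (fun l : ℝ => Real.exp (-l * τ1)) 0 l = g l := by
    intro l hl
    have hl' : l ≠ 0 := hl
    simp [slope, g, hl', Real.exp_zero, vsub_eq_sub, div_eq_inv_mul, mul_comm]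
  have hs' : Tendsto g (nhdsWithin 0 {(0:ℝ)}ᶜ) (nhds (-τ1)) := by
    refine hs.congr' ?_
    filter_upwards [self_mem_nhdsWithin] with l hl using heq l hl
  have hpure : Tendsto g (pure (0:ℝ)) (nhds (-τ1)) := by
    have : g 0 = -τ1 := by simp [g]
    simpa [this] using (tendsto_pure_nhds g 0)
  have : Tendsto g (nhds 0) (nhds (-τ1)) := by
    rw [← nhdsNE_sup_pure]
    exact hs'.sup hpure
  have hg0 : g 0 = -τ1 := by simp [g]
  unfold ContinuousAt
  rw [hg0]
  exact this

theorem stmt13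
    (b βvh βhv m μv τv τh τ1 R0 : ℝ)
    (hb : 0 < b) (hβvh : 0 < βvh) (hβhv : 0 < βhv) (hm : 0 < m)
    (hμv : 0 < μv) (hτv : 0 < τv) (hτh : 0 < τh) (hτ1 : 0 < τ1)
    (hR0 : R0 = b ^ 2 * βvh * βhv * m * τ1 / (μv * (μv * τv + 1)))
    (F : ℝ → ℝ)
    (hF : F = fun l => τh * τv * l ^ 3 + (2 * τh * τv * μv + τh + τv) * l ^ 2
      + (τh * τv * μv ^ 2 + τh * μv + 2 * τv * μv + 1) * l
      + (τv * μv ^ 2 + μv)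
      + b ^ 2 * βvh * βhv * m *
          (if l = 0 then -τ1 else (Real.exp (-l * τ1) - 1) / l)) :
    (R0 < 1 → ∀ l : ℝ, F l = 0 → l < 0) ∧
    (R0 > 1 → ∃ l : ℝ, 0 < l ∧ F l = 0) := by
  have hK : 0 < b ^ 2 * βvh * βhv * m := by positivity
  have hden : 0 < μv * (μv * τv + 1) := by positivity
  constructor
  · intro hlt l hroot
    have hKτ1 : b ^ 2 * βvh * βhv * m * τ1 < μv * (μv * τv + 1) := by
      rw [hR0, div_lt_one hden] at hlt
      exact hlt
    by_contra hle
    push_neg at hle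
    rcases eq_or_lt_of_le hle with h0 | h0
    · rw [hF] at hroot
      rw [← h0] at hroot
      norm_num at hroot
      nlinarith [hroot]
    · have hexp := exp_term_gt τ1 l hτ1 h0
      have hne : l ≠ 0 := ne_of_gt h0
      rw [hF] at hroot
      simp only [if_neg hne] at hroot
      have h1 : 0 < τh * τv * l ^ 3 := by positivity
      have h2 : 0 < (2 * τh * τv * μv + τh + τv) * l ^ 2 := by positivity
      have h3 : 0 < (τh * τv * μv ^ 2 + τh * μv + 2 * τv * μv + 1) * l := by positivity
      have h4 : b ^ 2 * βvh * βhv * m * (-τ1) <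
          b ^ 2 * βvh * βhv * m * ((Real.exp (-l * τ1) - 1) / l) :=
        mul_lt_mul_of_pos_left hexp hK
      nlinarith [hroot, h1, h2, h3, h4, hKτ1]
  · intro hgt
    have hKτ1 : μv * (μv * τv + 1) < b ^ 2 * βvh * βhv * m * τ1 := by
      rw [hR0, gt_iff_lt, one_lt_div hden] at hgt
      exact hgt
    set M : ℝ := max 1 (b ^ 2 * βvh * βhv * m * τ1 / (τh * τv)) with hM
    have hM1 : 1 ≤ M := le_max_left _ _
    have hMpos : 0 < M := lt_of_lt_of_le one_pos hM1
    have hM2 : b ^ 2 * βvh * βhv * m * τ1 ≤ τh * τv * M := by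
      have := le_max_right 1 (b ^ 2 * βvh * βhv * m * τ1 / (τh * τv))
      rw [div_le_iff₀ (by positivity)] at this
      linarith [this]
    have hM3 : M ≤ M ^ 3 := by
      nlinarith [mul_nonneg (mul_nonneg hMpos.le (sub_nonneg.mpr hM1))
        (by linarith : (0:ℝ) ≤ M + 1)]
    -- continuity of F
    have hFc : Continuous F := by
      rw [continuous_iff_continuousAt]
      intro x
      rcases eq_or_ne x 0 with hx | hx
      · subst hx
        rw [hF]
        exact ContinuousAt.add (by fun_prop) (continuousAt_const.mul (g_contAt0 τ1))
      · have hc : ContinuousAt (fun l : ℝ => τh * τv * l ^ 3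
            + (2 * τh * τv * μv + τh + τv) * l ^ 2
            + (τh * τv * μv ^ 2 + τh * μv + 2 * τv * μv + 1) * l
            + (τv * μv ^ 2 + μv)
            + b ^ 2 * βvh * βhv * m * ((Real.exp (-l * τ1) - 1) / l)) x := by
          apply ContinuousAt.add (by fun_prop)
          exact continuousAt_const.mul
            (ContinuousAt.div (by fun_prop) continuousAt_id hx)
        apply hc.congr
        filter_upwards [eventually_ne_nhds hx] with y hy
        rw [hF]
        simp only [if_neg hy]
    have hF0 : F 0 < 0 := by
      rw [hF]
      norm_num
      nlinarith [hKτ1]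
    have hFM : 0 < F M := by
      have hexp := exp_term_gt τ1 M hτ1 hMpos
      have h4 : b ^ 2 * βvh * βhv * m * (-τ1) <
          b ^ 2 * βvh * βhv * m * ((Real.exp (-M * τ1) - 1) / M) :=
        mul_lt_mul_of_pos_left hexp hK
      rw [hF]
      simp only [if_neg (ne_of_gt hMpos)]
      have h1 : 0 < (2 * τh * τv * μv + τh + τv) * M ^ 2 := by positivity
      have h2 : 0 < (τh * τv * μv ^ 2 + τh * μv + 2 * τv * μv + 1) * M := by positivity
      have h5 : τh * τv * M ≤ τh * τv * M ^ 3 :=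
        mul_le_mul_of_nonneg_left hM3 (by positivity)
      rw [mul_neg] at h4
      have h6 : 0 < τv * μv ^ 2 + μv := by positivity
      linarith [h1, h2, h4, h5, hM2, h6]
    have hmem : (0 : ℝ) ∈ Set.Icc (F 0) (F M) := ⟨le_of_lt hF0, le_of_lt hFM⟩
    obtain ⟨c, hc, hFc0⟩ :=
      intermediate_value_Icc (le_of_lt hMpos) hFc.continuousOn hmem
    refine ⟨c, ?_, hFc0⟩
    rcases eq_or_lt_of_le hc.1 with h | h
    · exfalso; rw [← h] at hFc0; exact absurd hFc0 (ne_of_lt hF0)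
    · exact h
end
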